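/- Let Ω be an open subset of ℝ^P and let F : Ω → ℝ^{M×N} be entrywise C² with the columns of F(x) spanning ℝ^M for every x ∈ Ω. Define Π(x) := I − Fᵀ(x)(F(x)Fᵀ(x))⁻¹F(x), Π_p(x) := Fᵀ(x)(F(x)Fᵀ(x))⁻¹ (∂F/∂x_p)(x), and Π_{q,p}(x) := Fᵀ(x)(F(x)Fᵀ(x))⁻¹ (∂²F/∂x_q∂x_p)(x). Then for all p, q = 1,…,P and every x ∈ Ω, ∂Π_p/∂x_q(x) = Π(x)Π_q(x)ᵀΠ_p(x) + Π_{q,p}(x) − Π_q(x)Π_p(x). -/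

import Mathlib

open Matrix

/-- Entrywise partial derivative of a matrix-valued function with respect to the `p`-th
coordinate. -/
noncomputable def matPartialDeriv {P M N : ℕ} (F : (Fin P → ℝ) → Matrix (Fin M) (Fin N) ℝ)
    (p : Fin P) (x : Fin P → ℝ) : Matrix (Fin M) (Fin N) ℝ :=
  Matrix.of fun i j => fderiv ℝ (fun y => F y i j) x (Pi.single p 1)

/-- `Π(x) := I − Fᵀ(x)(F(x)Fᵀ(x))⁻¹F(x)`. -/
noncomputable def projMat {P M N : ℕ} (F : (Fin P → ℝ) → Matrix (Fin M) (Fin N) ℝ)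
    (x : Fin P → ℝ) : Matrix (Fin N) (Fin N) ℝ :=
  1 - (F x)ᵀ * (F x * (F x)ᵀ)⁻¹ * F x

/-- `Π_p(x) := Fᵀ(x)(F(x)Fᵀ(x))⁻¹ (∂F/∂x_p)(x)`. -/
noncomputable def projMatP {P M N : ℕ} (F : (Fin P → ℝ) → Matrix (Fin M) (Fin N) ℝ)
    (p : Fin P) (x : Fin P → ℝ) : Matrix (Fin N) (Fin N) ℝ :=
  (F x)ᵀ * (F x * (F x)ᵀ)⁻¹ * matPartialDeriv F p x

/-- `Π_{q,p}(x) := Fᵀ(x)(F(x)Fᵀ(x))⁻¹ (∂²F/∂x_q∂x_p)(x)`. -/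
noncomputable def projMatQP {P M N : ℕ} (F : (Fin P → ℝ) → Matrix (Fin M) (Fin N) ℝ)
    (q p : Fin P) (x : Fin P → ℝ) : Matrix (Fin N) (Fin N) ℝ :=
  (F x)ᵀ * (F x * (F x)ᵀ)⁻¹ * matPartialDeriv (matPartialDeriv F p) q x

/-!
With `F⁺ := Fᵀ(FFᵀ)⁻¹` the pseudo-inverse of `F`, `Π_p = F⁺ ∂_pF`, so the product rule gives
`∂_qΠ_p = ∂_qF⁺ ∂_pF + Π_{q,p}`. Differentiating `G⁻¹` for the Gram matrix `G = FFᵀ` yields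
`∂_qF⁺ = (I - F⁺F)(∂_qF)ᵀG⁻¹ - F⁺ ∂_qF F⁺`, and `G⁻¹ = F⁺ᵀF⁺` turns the first term into
`Π Π_qᵀ` after multiplying by `∂_pF`. The spanning hypothesis is what makes `G` invertible:
`rank (FFᵀ) = rank F = M`.
-/

/-- The Moore–Penrose pseudo-inverse of a matrix of full row rank. -/
noncomputable def rightPinv {R m n : Type*} [CommRing R] [Fintype m] [Fintype n] [DecidableEq m]
    (A : Matrix m n R) : Matrix n m R :=
  Aᵀ * (A * Aᵀ)⁻¹

section Algebra

variable {R m n : Type*} [Fintype m] [Fintype n] [DecidableEq m]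

theorem isUnit_det_mul_transpose_of_span_col_eq_top [Field R] [LinearOrder R]
    [IsStrictOrderedRing R] {A : Matrix m n R} (h : Submodule.span R (Set.range A.col) = ⊤) :
    IsUnit (A * Aᵀ).det := by
  rw [← Matrix.isUnit_iff_isUnit_det, ← Matrix.mulVec_surjective_iff_isUnit]
  change Function.Surjective (A * Aᵀ).mulVecLin
  rw [← LinearMap.range_eq_top]
  apply Submodule.eq_top_of_finrank_eq
  rw [← Matrix.rank, Matrix.rank_self_mul_transpose, Matrix.rank_eq_finrank_span_cols, h,
    finrank_top]

variable [CommRing R]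

theorem rightPinv_transpose_mul_rightPinv {A : Matrix m n R} (hA : IsUnit (A * Aᵀ).det) :
    (rightPinv A)ᵀ * rightPinv A = (A * Aᵀ)⁻¹ := by
  have hsymm : (A * Aᵀ)ᵀ = A * Aᵀ := by rw [transpose_mul, transpose_transpose]
  rw [rightPinv, transpose_mul, transpose_nonsing_inv, hsymm, transpose_transpose,
    Matrix.mul_assoc, ← Matrix.mul_assoc A, Matrix.mul_nonsing_inv _ hA, Matrix.mul_one]

end Algebra

def EntrywiseDifferentiableAt (𝕜 : Type*) [NontriviallyNormedField 𝕜] {E m n : Type*}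
    [NormedAddCommGroup E] [NormedSpace 𝕜 E] (A : E → Matrix m n 𝕜) (x : E) : Prop :=
  ∀ i j, DifferentiableAt 𝕜 (fun y => A y i j) x

namespace EntrywiseDifferentiableAt

variable {𝕜 E m n : Type*} [NontriviallyNormedField 𝕜] [NormedAddCommGroup E] [NormedSpace 𝕜 E]
  {x : E}

theorem transpose {A : E → Matrix m n 𝕜} (hA : EntrywiseDifferentiableAt 𝕜 A x) :
    EntrywiseDifferentiableAt 𝕜 (fun y => (A y)ᵀ) x :=
  fun i j => hA j i

theorem mul [Fintype m] {l : Type*} {A : E → Matrix l m 𝕜} {B : E → Matrix m n 𝕜}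
    (hA : EntrywiseDifferentiableAt 𝕜 A x) (hB : EntrywiseDifferentiableAt 𝕜 B x) :
    EntrywiseDifferentiableAt 𝕜 (fun y => A y * B y) x := by
  intro i j
  simp only [Matrix.mul_apply]
  exact DifferentiableAt.fun_sum fun k _ => (hA i k).mul (hB k j)

theorem differentiableAt_det [Fintype n] [DecidableEq n] {A : E → Matrix n n 𝕜}
    (hA : EntrywiseDifferentiableAt 𝕜 A x) : DifferentiableAt 𝕜 (fun y => (A y).det) x := by
  simp only [Matrix.det_apply, Units.smul_def, zsmul_eq_mul]
  exact DifferentiableAt.fun_sum fun σ _ =>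
    (HasFDerivAt.finsetProd fun i _ => (hA (σ i) i).hasFDerivAt).differentiableAt.const_mul _

theorem inv [Fintype n] [DecidableEq n] {A : E → Matrix n n 𝕜}
    (hA : EntrywiseDifferentiableAt 𝕜 A x) (hdet : IsUnit (A x).det) :
    EntrywiseDifferentiableAt 𝕜 (fun y => (A y)⁻¹) x := by
  -- Cramer's rule: `(A⁻¹) i j = det (A with row j replaced by eᵢ) / det A`.
  intro i j
  simp only [Matrix.inv_def, Matrix.smul_apply, Ring.inverse_eq_inv, Matrix.adjugate_apply,
    smul_eq_mul]
  refine (hA.differentiableAt_det.inv hdet.ne_zero).mul (differentiableAt_det fun k l => ?_)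
  by_cases hk : k = j
  · simp [Matrix.updateRow_apply, hk]
  · simpa [Matrix.updateRow_apply, hk] using hA k l

end EntrywiseDifferentiableAt

section PartialDerivative

variable {P M N : ℕ} {x : Fin P → ℝ}

theorem matPartialDeriv_congr_of_eventuallyEq {A B : (Fin P → ℝ) → Matrix (Fin M) (Fin N) ℝ}
    (h : A =ᶠ[nhds x] B) (q : Fin P) : matPartialDeriv A q x = matPartialDeriv B q x := by
  ext i j
  simp only [matPartialDeriv, Matrix.of_apply]
  have hij : (fun y => A y i j) =ᶠ[nhds x] fun y => B y i j :=
    h.mono fun y hy => by simp only [hy]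
  rw [hij.fderiv_eq]

theorem matPartialDeriv_const (C : Matrix (Fin M) (Fin N) ℝ) (q : Fin P) :
    matPartialDeriv (fun _ => C) q x = 0 := by
  ext i j
  simp [matPartialDeriv]

theorem matPartialDeriv_transpose (A : (Fin P → ℝ) → Matrix (Fin M) (Fin N) ℝ) (q : Fin P) :
    matPartialDeriv (fun y => (A y)ᵀ) q x = (matPartialDeriv A q x)ᵀ :=
  rfl

theorem matPartialDeriv_mul {K : ℕ} {A : (Fin P → ℝ) → Matrix (Fin M) (Fin K) ℝ}
    {B : (Fin P → ℝ) → Matrix (Fin K) (Fin N) ℝ} (hA : EntrywiseDifferentiableAt ℝ A x)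
    (hB : EntrywiseDifferentiableAt ℝ B x) (q : Fin P) :
    matPartialDeriv (fun y => A y * B y) q x
      = matPartialDeriv A q x * B x + A x * matPartialDeriv B q x := by
  ext i j
  simp only [matPartialDeriv, Matrix.of_apply, Matrix.add_apply, Matrix.mul_apply]
  rw [fderiv_fun_sum fun k _ => (hA i k).fun_mul (hB k j), ← Finset.sum_add_distrib]
  simp only [FunLike.coe_sum, Finset.sum_apply]
  refine Finset.sum_congr rfl fun k _ => ?_
  rw [fderiv_fun_mul (hA i k) (hB k j)]
  simp only [_root_.add_apply, _root_.smul_apply, smul_eq_mul]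
  ring

theorem matPartialDeriv_inv {A : (Fin P → ℝ) → Matrix (Fin M) (Fin M) ℝ}
    (hA : EntrywiseDifferentiableAt ℝ A x) (hdet : IsUnit (A x).det) (q : Fin P) :
    matPartialDeriv (fun y => (A y)⁻¹) q x
      = -((A x)⁻¹ * matPartialDeriv A q x * (A x)⁻¹) := by
  have hinv : (fun y => A y * (A y)⁻¹) =ᶠ[nhds x] fun _ => 1 := by
    filter_upwards [hA.differentiableAt_det.continuousAt.eventually_ne hdet.ne_zero] with y hy
    exact Matrix.mul_nonsing_inv _ (isUnit_iff_ne_zero.2 hy)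
  have hsum : matPartialDeriv A q x * (A x)⁻¹ + A x * matPartialDeriv (fun y => (A y)⁻¹) q x
      = 0 := by
    rw [← matPartialDeriv_mul hA (hA.inv hdet), matPartialDeriv_congr_of_eventuallyEq hinv,
      matPartialDeriv_const]
  calc matPartialDeriv (fun y => (A y)⁻¹) q x
      = (A x)⁻¹ * (A x * matPartialDeriv (fun y => (A y)⁻¹) q x) :=
        (Matrix.nonsing_inv_mul_cancel_left _ _ hdet).symm
    _ = -((A x)⁻¹ * matPartialDeriv A q x * (A x)⁻¹) := by
        rw [eq_neg_of_add_eq_zero_right hsum, Matrix.mul_neg, Matrix.mul_assoc]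

end PartialDerivative

section Smoothness

variable {𝕜 E m n : Type*} [NontriviallyNormedField 𝕜] [NormedAddCommGroup E] [NormedSpace 𝕜 E]
  {Ω : Set E} {r : WithTop ℕ∞}

theorem entrywiseDifferentiableAt_of_contDiffOn {F : E → Matrix m n 𝕜}
    (hF : ∀ i j, ContDiffOn 𝕜 r (fun y => F y i j) Ω) (hr : r ≠ 0) (hΩ : IsOpen Ω) {x : E}
    (hx : x ∈ Ω) : EntrywiseDifferentiableAt 𝕜 F x :=
  fun i j => ((hF i j).differentiableOn hr).differentiableAt (hΩ.mem_nhds hx)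

theorem contDiffOn_matPartialDeriv {P M N : ℕ} {s : WithTop ℕ∞}
    {F : (Fin P → ℝ) → Matrix (Fin M) (Fin N) ℝ} {Ω : Set (Fin P → ℝ)}
    (hF : ∀ i j, ContDiffOn ℝ r (fun y => F y i j) Ω) (hΩ : IsOpen Ω) (hsr : s + 1 ≤ r)
    (p : Fin P) (i : Fin M) (j : Fin N) :
    ContDiffOn ℝ s (fun y => matPartialDeriv F p y i j) Ω :=
  ((hF i j).fderiv_of_isOpen hΩ hsr).clm_apply contDiffOn_const

end Smoothness

theorem matPartialDeriv_rightPinv {P M N : ℕ} {x : Fin P → ℝ}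
    {A : (Fin P → ℝ) → Matrix (Fin M) (Fin N) ℝ} (hA : EntrywiseDifferentiableAt ℝ A x)
    (hdet : IsUnit (A x * (A x)ᵀ).det) (q : Fin P) :
    matPartialDeriv (fun y => rightPinv (A y)) q x
      = (1 - rightPinv (A x) * A x) * (matPartialDeriv A q x)ᵀ * (A x * (A x)ᵀ)⁻¹
        - rightPinv (A x) * matPartialDeriv A q x * rightPinv (A x) := by
  have hG := hA.mul hA.transpose
  simp only [rightPinv]
  rw [matPartialDeriv_mul hA.transpose (hG.inv hdet), matPartialDeriv_inv hG hdet,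
    matPartialDeriv_mul hA hA.transpose, matPartialDeriv_transpose]
  simp only [Matrix.mul_add, Matrix.add_mul, Matrix.sub_mul, Matrix.mul_neg, Matrix.one_mul,
    Matrix.mul_assoc]
  abel

/-- If `F : Ω → ℝ^{M×N}` is entrywise `C²` on an open `Ω ⊆ ℝ^P` with the
columns of `F(x)` spanning `ℝ^M` for all `x ∈ Ω`, then
`∂Π_p/∂x_q(x) = Π(x)Π_q(x)ᵀΠ_p(x) + Π_{q,p}(x) − Π_q(x)Π_p(x)` for all `p, q` and `x ∈ Ω`. -/
theorem stmt5 {P M N : ℕ} {Ω : Set (Fin P → ℝ)} (hΩ : IsOpen Ω)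
    (F : (Fin P → ℝ) → Matrix (Fin M) (Fin N) ℝ)
    (hF : ∀ i j, ContDiffOn ℝ 2 (fun x => F x i j) Ω)
    (hspan : ∀ x ∈ Ω,
      Submodule.span ℝ (Set.range (fun n : Fin N => fun m : Fin M => F x m n)) = ⊤) :
    ∀ x ∈ Ω, ∀ p q : Fin P,
      matPartialDeriv (projMatP F p) q x
        = projMat F x * (projMatP F q x)ᵀ * projMatP F p x
          + projMatQP F q p x - projMatP F q x * projMatP F p x := by
  intro x hx p q
  have hFx := entrywiseDifferentiableAt_of_contDiffOn hF two_ne_zero hΩ hx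
  have hFpx := entrywiseDifferentiableAt_of_contDiffOn
    (contDiffOn_matPartialDeriv hF hΩ (by norm_num) p) one_ne_zero hΩ hx
  have hdet := isUnit_det_mul_transpose_of_span_col_eq_top (hspan x hx)
  have hpinv : EntrywiseDifferentiableAt ℝ (fun y => rightPinv (F y)) x :=
    hFx.transpose.mul ((hFx.mul hFx.transpose).inv hdet)
  change matPartialDeriv (fun y => rightPinv (F y) * matPartialDeriv F p y) q x
    = (1 - rightPinv (F x) * F x) * (rightPinv (F x) * matPartialDeriv F q x)ᵀ
        * (rightPinv (F x) * matPartialDeriv F p x)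
      + rightPinv (F x) * matPartialDeriv (matPartialDeriv F p) q x
      - rightPinv (F x) * matPartialDeriv F q x * (rightPinv (F x) * matPartialDeriv F p x)
  rw [matPartialDeriv_mul hpinv hFpx, matPartialDeriv_rightPinv hFx hdet,
    ← rightPinv_transpose_mul_rightPinv hdet, transpose_mul]
  simp only [Matrix.sub_mul, Matrix.mul_assoc]
  abel
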